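/- arXiv:2604.11480 — 4 statements merged into one kernel-verified Lean document; each statement's English description precedes it below -/
import Mathlib

section
/- Let G = (V, E) be a finite directed graph with adjacency matrix M over ℚ, let n = |V|, and let v, v' ∈ V. If for all i with 1 ≤ i ≤ 2n - 1 the column sums of M^i at v and at v' agree, then they agree for all i ≥ 1; equivalently, the number of walks of each length ending in v equals the number of walks of that length ending in v'. -/
/-!
By Cayley–Hamilton, for every linear functional `f` on matrices the sequence `k ↦ f (M ^ (k + 1))`
solves the linear recurrence of order `n` whose characteristic polynomial is that of `M`. The
column sums at `v` and at `v'` are two such sequences, and solutions of an order-`n` recurrence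
that agree on their first `n` terms agree everywhere.
-/

open Polynomial

namespace LinearRecurrence

variable {R A : Type*} [CommRing R] [Ring A] [Algebra R A]

theorem isSolution_of_aeval_charPoly_eq_zero (E : LinearRecurrence R) {x : A}
    (hx : aeval x E.charPoly = 0) (f : A →ₗ[R] R) (a : A) :
    E.IsSolution fun k => f (x ^ k * a) := by
  have hpow : x ^ E.order = ∑ i : Fin E.order, E.coeffs i • x ^ (i : ℕ) := by
    simpa [charPoly, sub_eq_zero, aeval_monomial, Algebra.smul_def] using hx
  intro k
  dsimp only
  rw [pow_add, hpow, Finset.mul_sum, Finset.sum_mul, map_sum]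
  refine Finset.sum_congr rfl fun i _ => ?_
  rw [mul_smul_comm, smul_mul_assoc, map_smul, smul_eq_mul, pow_add]

end LinearRecurrence

namespace Matrix

variable {n R : Type*} [Fintype n] [DecidableEq n] [CommRing R]

noncomputable def charpolyRecurrence (M : Matrix n n R) : LinearRecurrence R :=
  ⟨Fintype.card n, fun i => -M.charpoly.coeff i⟩

theorem charPoly_charpolyRecurrence (M : Matrix n n R) :
    M.charpolyRecurrence.charPoly = M.charpoly := by
  nontriviality R
  conv_rhs => rw [M.charpoly_monic.as_sum, charpoly_natDegree_eq_dim]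
  simp only [LinearRecurrence.charPoly, charpolyRecurrence, ← C_mul_X_pow_eq_monomial, map_neg,
    Finset.sum_neg_distrib, sub_neg_eq_add, map_one, one_mul]
  exact congrArg _ (Fin.sum_univ_eq_sum_range (fun i => C (M.charpoly.coeff i) * X ^ i) _)

theorem isSolution_charpolyRecurrence (M : Matrix n n R) (f : Matrix n n R →ₗ[R] R)
    (A : Matrix n n R) : M.charpolyRecurrence.IsSolution fun k => f (M ^ k * A) :=
  M.charpolyRecurrence.isSolution_of_aeval_charPoly_eq_zero
    (by rw [charPoly_charpolyRecurrence, aeval_self_charpoly]) f A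

end Matrix

open Matrix in
theorem stmt5_general {V : Type*} [Fintype V] [DecidableEq V]
    (M : Matrix V V ℚ)
    (v v' : V)
    (h : ∀ i : ℕ, 1 ≤ i → i ≤ 2 * Fintype.card V - 1 →
      ∑ u : V, (M ^ i) u v = ∑ u : V, (M ^ i) u v') :
    ∀ i : ℕ, 1 ≤ i → ∑ u : V, (M ^ i) u v = ∑ u : V, (M ^ i) u v' := by
  let colSum (w : V) : Matrix V V ℚ →ₗ[ℚ] ℚ := ∑ u, entryLinearMap ℚ ℚ u w
  have hcolSum (w : V) (i : ℕ) : colSum w (M ^ i * M) = ∑ u, (M ^ (i + 1)) u w := by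
    simp [colSum, ← pow_succ]
  have hsol (w : V) : M.charpolyRecurrence.IsSolution fun k => colSum w (M ^ k * M) :=
    M.isSolution_charpolyRecurrence (colSum w) M
  have hagree : (fun k => colSum v (M ^ k * M)) = fun k => colSum v' (M ^ k * M) := by
    refine (M.charpolyRecurrence.eq_iff_eqOn_range_order _ _ (hsol v) (hsol v')).2 fun k hk => ?_
    have hlt : k < Fintype.card V := Finset.mem_range.mp hk
    simp only [hcolSum]
    exact h (k + 1) (by omega) (by omega)
  rintro i hi
  obtain ⟨k, rfl⟩ := Nat.exists_eq_add_of_le' hi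
  simpa only [hcolSum] using congrFun hagree k

theorem stmt5 {V : Type*} [Fintype V] [DecidableEq V]
    (E : V → V → Prop) [DecidableRel E]
    (M : Matrix V V ℚ) (hM : ∀ u w, M u w = if E u w then 1 else 0)
    (v v' : V)
    (h : ∀ i : ℕ, 1 ≤ i → i ≤ 2 * Fintype.card V - 1 →
      ∑ u : V, (M ^ i) u v = ∑ u : V, (M ^ i) u v') :
    ∀ i : ℕ, 1 ≤ i → ∑ u : V, (M ^ i) u v = ∑ u : V, (M ^ i) u v' :=
  stmt5_general M v v' h
end

section
/- Let α₁ ∈ ℚ^{1×n₁}, M₁ ∈ ℚ^{n₁×n₁}, η₁ ∈ ℚ^{n₁×1} and α₂ ∈ ℚ^{1×n₂}, M₂ ∈ ℚ^{n₂×n₂}, η₂ ∈ ℚ^{n₂×1}. If α₁ · M₁^i · η₁ = α₂ · M₂^i · η₂ for all i with 0 ≤ i ≤ n₁ + n₂ - 1, then α₁ · M₁^i · η₁ = α₂ · M₂^i · η₂ for all i ∈ ℕ₀. -/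
/-!
By Cayley–Hamilton, `M ^ i` is `aeval M (X ^ i %ₘ M.charpoly)`, a linear combination of the
powers `M ^ k` with `k` below the size of `M`; so `u * M ^ i * v` vanishes for all `i` once it
vanishes for those `k`. Applied to the difference automaton with initial vector `(α₁, -α₂)`,
transition matrix `fromBlocks M₁ 0 0 M₂` and final vector `(η₁; η₂)`, of size `n₁ + n₂`,
this gives the theorem.
-/

open Matrix Polynomial

theorem Matrix.mul_pow_mul_eq_zero_of_forall_lt_card {R l m o : Type*} [CommRing R] [Nontrivial R]
    [Fintype m] [DecidableEq m] (u : Matrix l m R) (M : Matrix m m R) (v : Matrix m o R)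
    (h : ∀ k < Fintype.card m, u * M ^ k * v = 0) (i : ℕ) : u * M ^ i * v = 0 := by
  set p := X ^ i %ₘ M.charpoly
  have hp : p.degree < Fintype.card m := by
    rw [← M.charpoly_degree_eq_dim]
    exact degree_modByMonic_lt _ M.charpoly_monic
  rw [M.pow_eq_aeval_mod_charpoly, aeval_def, eval₂_eq_sum, Polynomial.sum_def, Matrix.mul_sum,
    Matrix.sum_mul]
  refine Finset.sum_eq_zero fun k hk => ?_
  have hk : k < Fintype.card m := by exact_mod_cast (le_degree_of_mem_supp k hk).trans_lt hp
  rw [Algebra.algebraMap_eq_smul_one, smul_mul_assoc, one_mul, Matrix.mul_smul, Matrix.smul_mul,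
    h k hk, smul_zero]

theorem Matrix.fromCols_mul_fromBlocks_pow_mul_fromRows {R l m₁ m₂ o : Type*} [CommRing R]
    [Fintype m₁] [Fintype m₂] [DecidableEq m₁] [DecidableEq m₂]
    (u₁ : Matrix l m₁ R) (u₂ : Matrix l m₂ R) (M₁ : Matrix m₁ m₁ R) (M₂ : Matrix m₂ m₂ R)
    (v₁ : Matrix m₁ o R) (v₂ : Matrix m₂ o R) (i : ℕ) :
    fromCols u₁ u₂ * fromBlocks M₁ 0 0 M₂ ^ i * fromRows v₁ v₂ =
      u₁ * M₁ ^ i * v₁ + u₂ * M₂ ^ i * v₂ := by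
  simp [fromBlocks_diagonal_pow, fromCols_mul_fromBlocks, fromCols_mul_fromRows]

theorem stmt8 (n₁ n₂ : ℕ)
    (α₁ : Matrix (Fin 1) (Fin n₁) ℚ) (M₁ : Matrix (Fin n₁) (Fin n₁) ℚ)
    (η₁ : Matrix (Fin n₁) (Fin 1) ℚ)
    (α₂ : Matrix (Fin 1) (Fin n₂) ℚ) (M₂ : Matrix (Fin n₂) (Fin n₂) ℚ)
    (η₂ : Matrix (Fin n₂) (Fin 1) ℚ)
    (h : ∀ i : ℕ, i ≤ n₁ + n₂ - 1 → α₁ * M₁ ^ i * η₁ = α₂ * M₂ ^ i * η₂) :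
    ∀ i : ℕ, α₁ * M₁ ^ i * η₁ = α₂ * M₂ ^ i * η₂ := by
  have difference (i : ℕ) : fromCols α₁ (-α₂) * fromBlocks M₁ 0 0 M₂ ^ i * fromRows η₁ η₂ =
      α₁ * M₁ ^ i * η₁ - α₂ * M₂ ^ i * η₂ := by
    rw [fromCols_mul_fromBlocks_pow_mul_fromRows, Matrix.neg_mul, Matrix.neg_mul, ← sub_eq_add_neg]
  intro i
  rw [← sub_eq_zero, ← difference]
  refine mul_pow_mul_eq_zero_of_forall_lt_card _ _ _ (fun k hk => ?_) i
  rw [difference, sub_eq_zero]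
  simp only [Fintype.card_sum, Fintype.card_fin] at hk
  exact h k (by omega)
end

section
/- Let F = (A, R) be a finite AAF with arguments a, b. If a ≄^dbs_F b (the discussion counts of a and b differ), then there exists i with 1 ≤ i ≤ 2|A| − 1 such that Dis_i(a) ≠ Dis_i(b). -/
/-- The number of walks of length `i` ending in `v`: tuples `(z_1, …, z_i, v)`
with all consecutive pairs edges of `E` (the attack relation). -/
def walkCount {V : Type*} [Fintype V] [DecidableEq V]
    (E : V → V → Prop) [DecidableRel E] (i : ℕ) (v : V) : ℕ :=
  Fintype.card {f : Fin (i + 1) → V //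
    (∀ j : Fin i, E (f j.castSucc) (f j.succ)) ∧ f (Fin.last i) = v}

/-- The discussion count `Dis_i(x)`. -/
def Dis {V : Type*} [Fintype V] [DecidableEq V]
    (E : V → V → Prop) [DecidableRel E] (i : ℕ) (x : V) : ℤ :=
  if Odd i then -(walkCount E i x : ℤ) else (walkCount E i x : ℤ)

/-- `a ⪰^dbs b`: the sequence `(Dis_i(a))_{i ≥ 1}` is lexicographically ≥ `(Dis_i(b))_{i ≥ 1}`. -/
def dbsGE {V : Type*} [Fintype V] [DecidableEq V]
    (E : V → V → Prop) [DecidableRel E] (a b : V) : Prop :=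
  (∀ i : ℕ, 1 ≤ i → Dis E i a = Dis E i b) ∨
    ∃ k : ℕ, 1 ≤ k ∧ Dis E k a > Dis E k b ∧
      ∀ j : ℕ, 1 ≤ j → j < k → Dis E j a = Dis E j b

/-! Walk counts are column sums of powers of the adjacency matrix `M`. By Cayley–Hamilton,
`M ^ m` is a linear combination of `M ^ 0, …, M ^ (n - 1)` where `n = |V|`, so every `M ^ k`
with `k ≥ 1` lies in the span of `M ^ 1, …, M ^ n`. Hence a linear functional vanishing on
these powers, such as the difference of the column sums at `a` and `b`, vanishes on all
positive powers: agreement of the walk counts up to length `n` already forces agreement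
everywhere. -/

open Finset Polynomial

def adjMatrix {V : Type*} (E : V → V → Prop) [DecidableRel E] (R : Type*) [Zero R] [One R] :
    Matrix V V R :=
  Matrix.of fun x y => if E x y then 1 else 0

section Walks

variable {V : Type*} [Fintype V] [DecidableEq V] (E : V → V → Prop) [DecidableRel E]

lemma walkCount_zero (v : V) : walkCount E 0 v = 1 :=
  Fintype.card_eq_one_iff.mpr
    ⟨⟨fun _ => v, fun j => j.elim0, rfl⟩,
      fun ⟨f, _, hv⟩ => by ext j; rw [Fin.eq_zero j]; exact hv⟩

lemma walkCount_eq_card_filter (i : ℕ) (v : V) :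
    walkCount E i v = #{f : Fin (i + 1) → V |
      (∀ j : Fin i, E (f j.castSucc) (f j.succ)) ∧ f (Fin.last i) = v} :=
  Fintype.card_subtype _

lemma walkCount_succ (i : ℕ) (v : V) :
    walkCount E (i + 1) v = ∑ u with E u v, walkCount E i u := by
  have h_init : walkCount E (i + 1) v = #{g : Fin (i + 1) → V |
      (∀ j : Fin i, E (g j.castSucc) (g j.succ)) ∧ E (g (Fin.last i)) v} := by
    rw [walkCount_eq_card_filter]
    refine card_nbij' Fin.init (fun g => Fin.snoc g v) ?_ ?_ ?_ ?_ <;>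
      simp only [Set.MapsTo, Set.LeftInvOn, coe_filter, mem_univ, true_and, Set.mem_ofPred_eq]
    · rintro f ⟨hf, rfl⟩
      refine ⟨fun j => ?_, ?_⟩
      · simpa [Fin.init] using hf j.castSucc
      · simpa [Fin.init] using hf (Fin.last i)
    · rintro g ⟨hg, hv⟩
      refine ⟨Fin.lastCases ?_ (fun j => ?_), by simp⟩
      · simpa using hv
      · simpa [Fin.succ_castSucc, -Fin.castSucc_succ] using hg j
    · rintro f ⟨-, rfl⟩
      exact Fin.snoc_init_self f
    · intro g _
      exact Fin.init_snoc _ _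
  rw [h_init, card_eq_sum_card_fiberwise (f := fun g => g (Fin.last i)) (t := {u | E u v})]
  · refine sum_congr rfl fun u hu => ?_
    rw [walkCount_eq_card_filter, filter_filter]
    congr 1
    ext g
    simp only [mem_filter, mem_univ, true_and]
    constructor
    · exact fun ⟨⟨hg, _⟩, hu⟩ => ⟨hg, hu⟩
    · rintro ⟨hg, rfl⟩
      exact ⟨⟨hg, by simpa using hu⟩, rfl⟩
  · intro g hg
    simp_all

lemma walkCount_cast_eq_sum_pow_apply (R : Type*) [Semiring R] (i : ℕ) (v : V) :
    (walkCount E i v : R) = ∑ x, (adjMatrix E R ^ i) x v := by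
  induction i generalizing v with
  | zero => simp [walkCount_zero, Matrix.one_apply]
  | succ i ih =>
    rw [walkCount_succ, Nat.cast_sum, sum_filter]
    simp only [pow_succ, Matrix.mul_apply]
    rw [sum_comm]
    refine sum_congr rfl fun u _ => ?_
    rw [← sum_mul, ← ih]
    by_cases h : E u v <;> simp [adjMatrix, h]

lemma dis_eq_iff_walkCount_eq (i : ℕ) (x y : V) :
    Dis E i x = Dis E i y ↔ walkCount E i x = walkCount E i y := by
  unfold Dis
  split_ifs <;> simp

end Walks

namespace Matrix

variable {n R : Type*} [Fintype n] [DecidableEq n] [CommRing R]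

theorem pow_succ_mem_span_pow_succ (M : Matrix n n R) (m : ℕ) :
    M ^ (m + 1) ∈
      Submodule.span R (Set.range fun j : Fin (Fintype.card n) => M ^ (j + 1 : ℕ)) := by
  nontriviality R
  cases isEmpty_or_nonempty n
  · simp [Subsingleton.elim (M ^ (m + 1)) 0]
  have hdeg : (X ^ m %ₘ M.charpoly).natDegree < Fintype.card n := by
    rw [← M.charpoly_natDegree_eq_dim]
    refine natDegree_modByMonic_lt _ M.charpoly_monic fun h => ?_
    have := congrArg natDegree h
    simp at this
  rw [pow_succ', pow_eq_aeval_mod_charpoly, aeval_eq_sum_range' hdeg, ← Fin.sum_univ_eq_sum_range,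
    mul_sum]
  refine Submodule.sum_mem _ fun j _ => ?_
  rw [mul_smul_comm, ← pow_succ']
  exact Submodule.smul_mem _ _ (Submodule.subset_span ⟨j, rfl⟩)

theorem map_pow_eq_zero_of_forall_le_card {N : Type*} [AddCommGroup N] [Module R N]
    (M : Matrix n n R) (L : Matrix n n R →ₗ[R] N)
    (h : ∀ i, 1 ≤ i → i ≤ Fintype.card n → L (M ^ i) = 0) {k : ℕ} (hk : 1 ≤ k) :
    L (M ^ k) = 0 := by
  obtain ⟨m, rfl⟩ := Nat.exists_eq_add_of_le' hk
  refine LinearMap.mem_ker.mp (Submodule.span_le.mpr ?_ (M.pow_succ_mem_span_pow_succ m))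
  rintro _ ⟨j, rfl⟩
  exact h _ (by omega) (by omega)

theorem sum_pow_apply_eq_of_forall_le_card (M : Matrix n n R) {a b : n}
    (h : ∀ i, 1 ≤ i → i ≤ Fintype.card n → ∑ x, (M ^ i) x a = ∑ x, (M ^ i) x b)
    {k : ℕ} (hk : 1 ≤ k) : ∑ x, (M ^ k) x a = ∑ x, (M ^ k) x b := by
  let L : Matrix n n R →ₗ[R] R := ∑ x, (entryLinearMap R R x a - entryLinearMap R R x b)
  have hL (A : Matrix n n R) : L A = ∑ x, A x a - ∑ x, A x b := by simp [L, sum_sub_distrib]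
  simpa [hL, sub_eq_zero] using M.map_pow_eq_zero_of_forall_le_card L
    (fun i hi hin => by rw [hL, sub_eq_zero, h i hi hin]) hk

end Matrix

theorem stmt13 {V : Type*} [Fintype V] [DecidableEq V]
    (R : V → V → Prop) [DecidableRel R] (a b : V)
    (h : ¬ ∀ i : ℕ, 1 ≤ i → Dis R i a = Dis R i b) :
    ∃ i : ℕ, 1 ≤ i ∧ i ≤ 2 * Fintype.card V - 1 ∧ Dis R i a ≠ Dis R i b := by
  have h_dis (i : ℕ) : Dis R i a = Dis R i b ↔
      ∑ x, (adjMatrix R ℤ ^ i) x a = ∑ x, (adjMatrix R ℤ ^ i) x b := by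
    rw [dis_eq_iff_walkCount_eq, ← walkCount_cast_eq_sum_pow_apply,
      ← walkCount_cast_eq_sum_pow_apply, Nat.cast_inj]
  contrapose! h
  intro i hi
  exact (h_dis i).mpr <| (adjMatrix R ℤ).sum_pow_apply_eq_of_forall_le_card
    (fun j hj hjn => (h_dis j).mp (h j hj (by omega))) hi
end

section
/- Let M ∈ ℚ^{n×n}, let α ∈ ℚ^{1×n}, and let η, η' ∈ ℚ^{n×1}. If α · M^i · (η − η') = 0 for all 0 ≤ i ≤ n − 1, then for all i ∈ ℕ₀ we have α · M^i · η = α · M^i · η'. -/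
/-!
By Cayley–Hamilton, `M ^ k = aeval M (X ^ k %ₘ M.charpoly)`, and the remainder has degree below
`n = deg M.charpoly`, so every power of `M` is a linear combination of `M ^ 0, …, M ^ (n - 1)`.
The map `X ↦ α * X * (η - η')` is linear, so vanishing on those powers forces it to vanish on all.
-/

open Polynomial

namespace Matrix

variable {R : Type*} [CommRing R] [Nontrivial R] {ι : Type*} [Fintype ι] [DecidableEq ι]

theorem pow_mem_span_pow_lt_card (M : Matrix ι ι R) (k : ℕ) :
    M ^ k ∈ Submodule.span R (Set.range fun i : Fin (Fintype.card ι) => M ^ (i : ℕ)) := by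
  rw [PowerBasis.mem_span_pow']
  refine ⟨X ^ k %ₘ M.charpoly, ?_, M.pow_eq_aeval_mod_charpoly k⟩
  rw [← M.charpoly_degree_eq_dim]
  exact degree_modByMonic_lt _ M.charpoly_monic

theorem mul_pow_mul_eq_zero_of_forall_lt_card_s17 {m p : Type*} (M : Matrix ι ι R)
    (α : Matrix m ι R) (d : Matrix ι p R) (h : ∀ i < Fintype.card ι, α * M ^ i * d = 0)
    (k : ℕ) : α * M ^ k * d = 0 := by
  have hk := M.pow_mem_span_pow_lt_card k
  generalize M ^ k = X at hk ⊢
  induction hk using Submodule.span_induction with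
  | mem _ hX =>
    obtain ⟨i, rfl⟩ := hX
    exact h i i.isLt
  | zero => simp
  | add X Y _ _ hX hY => rw [Matrix.mul_add, Matrix.add_mul, hX, hY, add_zero]
  | smul c X _ hX => rw [Matrix.mul_smul, Matrix.smul_mul, hX, smul_zero]

end Matrix

theorem stmt17 (n : ℕ) (M : Matrix (Fin n) (Fin n) ℚ)
    (α : Matrix (Fin 1) (Fin n) ℚ) (η η' : Matrix (Fin n) (Fin 1) ℚ)
    (h : ∀ i : ℕ, i ≤ n - 1 → α * M ^ i * (η - η') = 0) :
    ∀ i : ℕ, α * M ^ i * η = α * M ^ i * η' := by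
  intro i
  rw [← sub_eq_zero, ← Matrix.mul_sub]
  refine M.mul_pow_mul_eq_zero_of_forall_lt_card_s17 α (η - η') (fun j hj => h j ?_) i
  rw [Fintype.card_fin] at hj
  omega
end
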